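/- arXiv:2002.07760 — 2 statements merged into one kernel-verified Lean document; each statement's English description precedes it below -/
import Mathlib

section
/- (Type C_N Weyl denominator formula) For any N nonzero complex numbers z₁, …, z_N, det_{1≤j,k≤N}( z_k^{j-N-1} − z_k^{N+1-j} ) = ∏_{ℓ=1}^{N} z_ℓ^{-N} (1 − z_ℓ²) · ∏_{1≤j<k≤N} (z_k − z_j)(1 − z_j z_k). -/
/-!
With `w = z⁻¹ + z`, the entry `z ^ (-m) - z ^ m` equals `(z⁻¹ - z) * (S (m - 1)).eval w`,
where `S` is the rescaled Chebyshev polynomial of the second kind, monic of degree `m - 1`.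
Pulling the factors `z_k⁻¹ - z_k` out of the columns leaves a Vandermonde determinant in the
`w_k`, and `w_i - w_j = (z_j - z_i) (1 - z_i z_j) / (z_i z_j)`.
-/

open Polynomial Polynomial.Chebyshev Finset

namespace Polynomial.Chebyshev

variable {R : Type*} [CommRing R]

theorem S_natCast_monic_and_natDegree [Nontrivial R] :
    ∀ n : ℕ, (S R n).Monic ∧ (S R n).natDegree = n
  | 0 => by simp
  | 1 => by simp
  | n + 2 => by
    obtain ⟨hmonic, hdeg⟩ := S_natCast_monic_and_natDegree (n + 1)
    obtain ⟨-, hdeg'⟩ := S_natCast_monic_and_natDegree n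
    push_cast at hmonic hdeg ⊢
    have hlt : (S R n).natDegree < (X * S R (n + 1)).natDegree := by
      rw [natDegree_X_mul hmonic.ne_zero]; omega
    rw [S_add_two]
    refine ⟨(monic_X.mul hmonic).sub_of_left (degree_lt_degree hlt), ?_⟩
    rw [natDegree_sub_eq_left_of_natDegree_lt hlt, natDegree_X_mul hmonic.ne_zero, hdeg]

theorem S_eval_add_mul_sub {x y : R} (hxy : x * y = 1) :
    ∀ n : ℕ, (S R n).eval (x + y) * (x - y) = x ^ (n + 1) - y ^ (n + 1)
  | 0 => by simp
  | 1 => by simp; ring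
  | n + 2 => by
    have h1 := S_eval_add_mul_sub hxy (n + 1)
    have h0 := S_eval_add_mul_sub hxy n
    push_cast at h1 ⊢
    rw [S_add_two, eval_sub, eval_mul, eval_X]
    linear_combination (x + y) * h1 - h0 + (x ^ (n + 1) - y ^ (n + 1)) * hxy

end Polynomial.Chebyshev

section TriangularProducts

variable {ι M : Type*} [CommMonoid M] [Fintype ι]

theorem Finset.prod_prod_Ioi_comm [Preorder ι] [LocallyFiniteOrderTop ι]
    [LocallyFiniteOrderBot ι] (f : ι → ι → M) :
    ∏ i, ∏ j ∈ Ioi i, f i j = ∏ j, ∏ i ∈ Iio j, f i j :=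
  prod_comm' fun i j => by simp

theorem Finset.prod_prod_Ioi_mul [LinearOrder ι] [LocallyFiniteOrderTop ι]
    [LocallyFiniteOrderBot ι] (f : ι → M) :
    ∏ i, ∏ j ∈ Ioi i, f i * f j = ∏ i, f i ^ (Fintype.card ι - 1) := by
  rw [prod_congr rfl fun i _ => prod_mul_distrib, prod_mul_distrib,
    prod_prod_Ioi_comm fun _ j => f j, ← prod_mul_distrib]
  refine prod_congr rfl fun i _ => ?_
  rw [prod_const, prod_const, ← pow_add, ← card_disjUnion _ _ (disjoint_Ioi_Iio i),
    Ioi_disjUnion_Iio, card_compl, card_singleton]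

theorem Fin.prod_prod_Ioi_rev {n : ℕ} (f : Fin n → Fin n → M) :
    ∏ i, ∏ j ∈ Ioi i, f (rev j) (rev i) = ∏ i, ∏ j ∈ Ioi i, f i j := by
  rw [prod_prod_Ioi_comm, ← Equiv.prod_comp revPerm]
  refine prod_congr rfl fun i _ => ?_
  rw [revPerm_apply, ← map_revPerm_Ioi, prod_map]
  simp

end TriangularProducts

namespace Matrix

theorem det_eval_rev_eq_prod_Ioi_sub {R : Type*} [CommRing R] {n : ℕ} (v : Fin n → R)
    (p : Fin n → R[X]) (h_deg : ∀ i, (p i).natDegree = i) (h_monic : ∀ i, (p i).Monic) :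
    det (of fun i j => (p (Fin.rev i)).eval (v j)) = ∏ i, ∏ j ∈ Ioi i, (v i - v j) := by
  rw [← det_submatrix_equiv_self Fin.revPerm, ← det_transpose]
  have hrev : ((of fun i j => (p (Fin.rev i)).eval (v j)).submatrix Fin.revPerm Fin.revPerm)ᵀ =
      of fun i j => (p j).eval (v (Fin.rev i)) := by
    ext i j; simp
  rw [hrev, ← det_eval_matrixOfPolynomials_eq_det_vandermonde _ p h_deg h_monic, det_vandermonde,
    Fin.prod_prod_Ioi_rev fun i j => v i - v j]

end Matrix

theorem zpow_neg_sub_zpow_eq_mul_S_eval {K : Type*} [Field K] {z : K} (hz : z ≠ 0) (n : ℕ) :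
    z ^ (-((n : ℤ) + 1)) - z ^ ((n : ℤ) + 1) = (z⁻¹ - z) * (S K n).eval (z⁻¹ + z) := by
  rw [mul_comm, S_eval_add_mul_sub (inv_mul_cancel₀ hz), _root_.zpow_neg, ← inv_zpow]
  norm_cast

theorem inv_sub_mul_inv_pow {K : Type*} [Field K] {z : K} (hz : z ≠ 0) {n : ℕ} (hn : n ≠ 0) :
    (z⁻¹ - z) * z⁻¹ ^ (n - 1) = z ^ (-(n : ℤ)) * (1 - z ^ 2) := by
  obtain ⟨n, rfl⟩ := Nat.exists_eq_add_one_of_ne_zero hn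
  rw [_root_.zpow_neg, ← inv_zpow, Nat.add_sub_cancel]
  norm_cast
  linear_combination z⁻¹ ^ n * z * inv_mul_cancel₀ hz

/-- Type C_N Weyl denominator formula: for nonzero `z₁, …, z_N`,
`det( z_k^{j-N-1} − z_k^{N+1-j} ) = ∏_ℓ z_ℓ^{-N} (1 − z_ℓ²) ·
∏_{j<k} (z_k − z_j)(1 − z_j z_k)`, indices `j, k` running over `1, …, N`. -/
theorem weyl_denominator_C (N : ℕ) (z : Fin N → ℂ) (hz : ∀ ℓ, z ℓ ≠ 0) :
    Matrix.det (Matrix.of fun j k : Fin N =>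
        z k ^ (((j : ℕ) : ℤ) + 1 - (N : ℤ) - 1) -
          z k ^ ((N : ℤ) + 1 - (((j : ℕ) : ℤ) + 1))) =
      (∏ ℓ : Fin N, z ℓ ^ (-(N : ℤ)) * (1 - z ℓ ^ 2)) *
        ∏ j : Fin N, ∏ k ∈ Finset.Ioi j, (z k - z j) * (1 - z j * z k) := by
  have hentry : ∀ (j k : Fin N), z k ^ (((j : ℕ) : ℤ) + 1 - (N : ℤ) - 1) -
      z k ^ ((N : ℤ) + 1 - (((j : ℕ) : ℤ) + 1)) =
      ((z k)⁻¹ - z k) * (S ℂ (Fin.rev j : ℕ)).eval ((z k)⁻¹ + z k) := by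
    intro j k
    rw [← zpow_neg_sub_zpow_eq_mul_S_eval (hz k), Fin.val_rev]
    congr 2 <;> omega
  have hdiff : ∀ i j, ((z i)⁻¹ + z i) - ((z j)⁻¹ + z j) =
      (z j - z i) * (1 - z i * z j) * ((z i)⁻¹ * (z j)⁻¹) := by
    intro i j
    field_simp [hz i, hz j]
    ring
  simp_rw [hentry]
  refine (Matrix.det_mul_row _
    (.of fun j k => (S ℂ (Fin.rev j : ℕ)).eval ((z k)⁻¹ + z k))).trans ?_
  rw [Matrix.det_eval_rev_eq_prod_Ioi_sub _ _ (fun i => (S_natCast_monic_and_natDegree i).2)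
    (fun i => (S_natCast_monic_and_natDegree i).1)]
  simp only [hdiff]
  rw [prod_congr rfl fun i _ => prod_mul_distrib, prod_mul_distrib, prod_prod_Ioi_mul,
    Fintype.card_fin, mul_left_comm, ← prod_mul_distrib, mul_comm]
  congr 1
  exact prod_congr rfl fun k _ => inv_sub_mul_inv_pow (hz k) (Fin.pos k).ne'
end

section
/- (Type D_N Weyl denominator formula) For any N nonzero complex numbers z₁, …, z_N with N ≥ 1, det_{1≤j,k≤N}( z_k^{j-N} + z_k^{N-j} ) = 2 ∏_{ℓ=1}^{N} z_ℓ^{1-N} · ∏_{1≤j<k≤N} (z_k − z_j)(1 − z_j z_k). -/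
/-!
With `t = z + z⁻¹` one has `z ^ m + z ^ (-m) = D_m(t)` for the Dickson polynomial
`D_m = dickson 1 1 m`, which has degree `m` and leading coefficient `1` (but `D_0 = 2`).
So the matrix is a Vandermonde matrix in the `t_k`, with the powers in decreasing order,
times a triangular matrix of determinant `2`; this gives `2 ∏_{j<k} (t_j - t_k)`, and
`t_j - t_k = (z_k - z_j)(1 - z_j z_k) / (z_j z_k)`.
-/

open Polynomial Matrix Finset

namespace Polynomial

variable {R : Type*} [CommRing R]

theorem natDegree_dickson_le (k : ℕ) (a : R) (n : ℕ) : (dickson k a n).natDegree ≤ n := by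
  induction n using Nat.twoStepInduction with
  | zero => exact (natDegree_sub_le _ _).trans (by simp)
  | one => simpa using natDegree_X_le
  | more n ih₁ ih₂ =>
    rw [dickson_add_two]
    refine (natDegree_sub_le _ _).trans (max_le ?_ ?_)
    · exact natDegree_mul_le.trans (by have := natDegree_X_le (R := R); omega)
    · exact (natDegree_C_mul_le _ _).trans (by omega)

theorem coeff_dickson_succ_self (k : ℕ) (a : R) (n : ℕ) :
    (dickson k a (n + 1)).coeff (n + 1) = 1 := by
  induction n with
  | zero => simp
  | succ n ih =>
    have hlow : (dickson k a n).coeff (n + 2) = 0 :=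
      coeff_eq_zero_of_natDegree_lt ((natDegree_dickson_le k a n).trans_lt (by omega))
    rw [dickson_add_two, coeff_sub, coeff_X_mul, coeff_C_mul, ih, hlow, mul_zero, sub_zero]

theorem prod_coeff_dickson_self (k : ℕ) (a : R) (n : ℕ) :
    ∏ i : Fin (n + 1), (dickson k a i).coeff i = 3 - k := by
  simp [Fin.prod_univ_succ, coeff_dickson_succ_self]

end Polynomial

namespace Matrix

variable {R : Type*} [CommRing R] {n : ℕ}

theorem det_eval_matrixOfPolynomials_rev (v : Fin n → R) (p : Fin n → R[X])
    (h_deg : ∀ i, (p i).natDegree ≤ i) :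
    (of fun i j => (p i.rev).eval (v j)).det =
      (∏ i, (p i).coeff i) * ∏ i, ∏ j ∈ Ioi i, (v i - v j) := by
  have hfactor : (of fun i j => (p i.rev).eval (v j))ᵀ = projVandermonde 1 v *
      (of fun i j : Fin n => (p j).coeff i).submatrix Fin.revPerm Fin.revPerm := by
    have : projVandermonde 1 v = (vandermonde v).submatrix id Fin.revPerm := by
      ext i j; simp [projVandermonde_apply]
    rw [this, submatrix_mul_equiv,
      ← eval_matrixOfPolynomials_eq_vandermonde_mul_matrixOfPolynomials v p h_deg]
    rfl
  rw [← det_transpose, hfactor, det_mul, det_projVandermonde, det_submatrix_equiv_self,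
    det_of_isUpperTriangular (matrixOfPolynomials_blockTriangular p h_deg), mul_comm]
  simp only [Pi.one_apply, one_mul, of_apply]

end Matrix

theorem Fin.prod_Ioi_mul_eq_prod_pow {M : Type*} [CommMonoid M] {n : ℕ} (f : Fin n → M) :
    ∏ i, ∏ j ∈ Ioi i, f i * f j = ∏ i, f i ^ (n - 1) := by
  have hswap : ∏ i, ∏ j ∈ Ioi i, f j = ∏ j, ∏ i ∈ Iio j, f j :=
    prod_comm' (by simp)
  calc ∏ i, ∏ j ∈ Ioi i, f i * f j
      = (∏ i, f i ^ (n - 1 - i)) * ∏ i, f i ^ (i : ℕ) := by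
        simp_rw [prod_mul_distrib, hswap, Finset.prod_const, Fin.card_Ioi, Fin.card_Iio]
    _ = ∏ i, f i ^ (n - 1) := by
        rw [← prod_mul_distrib]
        refine prod_congr rfl fun i _ => ?_
        rw [← pow_add]
        congr 1
        omega

theorem add_inv_sub_add_inv {K : Type*} [Field K] {x y : K} (hx : x ≠ 0) (hy : y ≠ 0) :
    x + x⁻¹ - (y + y⁻¹) = (y - x) * (1 - x * y) * (x * y)⁻¹ := by
  field_simp
  ring

theorem prod_Ioi_add_inv_sub_add_inv {K : Type*} [Field K] {n : ℕ} (z : Fin n → K)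
    (hz : ∀ i, z i ≠ 0) :
    ∏ i, ∏ j ∈ Ioi i, (z i + (z i)⁻¹ - (z j + (z j)⁻¹)) =
      (∏ i, z i ^ (n - 1))⁻¹ * ∏ i, ∏ j ∈ Ioi i, (z j - z i) * (1 - z i * z j) := by
  simp_rw [add_inv_sub_add_inv (hz _) (hz _), prod_mul_distrib, prod_inv_distrib,
    Fin.prod_Ioi_mul_eq_prod_pow, mul_comm]

/-- Type D_N Weyl denominator formula: for nonzero `z₁, …, z_N`, `N ≥ 1`,
`det( z_k^{j-N} + z_k^{N-j} ) = 2 ∏_ℓ z_ℓ^{1-N} ·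
∏_{j<k} (z_k − z_j)(1 − z_j z_k)`, indices `j, k` running over `1, …, N`. -/
theorem weyl_denominator_D (N : ℕ) (hN : 1 ≤ N) (z : Fin N → ℂ) (hz : ∀ ℓ, z ℓ ≠ 0) :
    Matrix.det (Matrix.of fun j k : Fin N =>
        z k ^ (((j : ℕ) : ℤ) + 1 - (N : ℤ)) +
          z k ^ ((N : ℤ) - (((j : ℕ) : ℤ) + 1))) =
      2 * (∏ ℓ : Fin N, z ℓ ^ (1 - (N : ℤ))) *
        ∏ j : Fin N, ∏ k ∈ Finset.Ioi j, (z k - z j) * (1 - z j * z k) := by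
  obtain ⟨n, rfl⟩ := Nat.exists_eq_add_of_le' hN
  set D : Fin (n + 1) → ℂ[X] := fun i => dickson 1 1 i
  have hentry : ∀ j k : Fin (n + 1), z k ^ (((j : ℕ) : ℤ) + 1 - ((n + 1 : ℕ) : ℤ)) +
      z k ^ (((n + 1 : ℕ) : ℤ) - ((j : ℕ) + 1)) = (D j.rev).eval (z k + (z k)⁻¹) := by
    intro j k
    have hexp : ((n + 1 : ℕ) : ℤ) - ((j : ℕ) + 1) = (j.rev : ℕ) := by rw [Fin.val_rev]; omega
    rw [dickson_one_one_eval_add_inv _ _ (mul_inv_cancel₀ (hz k)), ← neg_sub, hexp,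
      _root_.zpow_neg, zpow_natCast, inv_pow, add_comm]
  have hpow : ∀ ℓ, z ℓ ^ (1 - ((n + 1 : ℕ) : ℤ)) = (z ℓ ^ n)⁻¹ := fun ℓ => by
    rw [Nat.cast_succ, sub_add_cancel_right, _root_.zpow_neg, zpow_natCast]
  simp_rw [hentry, hpow]
  rw [det_eval_matrixOfPolynomials_rev _ D fun i => natDegree_dickson_le 1 1 i,
    prod_coeff_dickson_self, prod_Ioi_add_inv_sub_add_inv z hz, prod_inv_distrib,
    Nat.add_sub_cancel]
  norm_num [mul_assoc]
end
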